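/- The key lemma for the lockstep correspondence of the traced Fibonacci functions: for every integer n and every continuation k and defunctionalized continuation c with k ≈ c, (1) fib_c(n,k,T) = a iff fib_c_def(n,c,T) = a for all traces T, and (2) the functional continuation fn (v1,T) => fib_c(n, fn (v2,T) => k(v1+v2,T), n::T) is related (≈) to C2(n+2, c). The proof is by simultaneous course-of-values induction on n. -/
import Mathlib


/-- The traced continuation-passing Fibonacci function: the trace records the
first argument of every recursive call. -/
def fibC {α : Type} (n : Int) (k : Int → List Int → α) (T : List Int) : α :=
  if n ≤ 1 then k n T
  else
    fibC (n - 1)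
      (fun v1 T => fibC (n - 2) (fun v2 T => k (v1 + v2) T) ((n - 2) :: T))
      ((n - 1) :: T)
termination_by n.toNat
decreasing_by all_goals omega

/-- Defunctionalized continuations. -/
inductive FibCont : Type
  | C0 : FibCont
  | C1 : Int → FibCont → FibCont
  | C2 : Int → FibCont → FibCont

mutual
  /-- The apply function of the defunctionalized continuations
  (fuel-indexed; `none` means the fuel is exhausted). -/
  def applyCont : ℕ → FibCont → Int → List Int → Option (Int × List Int)
    | 0, _, _, _ => none
    | _+1, .C0, v, T => some (v, T)
    | n+1, .C1 v1 c, v2, T => applyCont n c (v1 + v2) T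
    | n+1, .C2 m c, v1, T => fibCDef n (m - 2) (.C1 v1 c) ((m - 2) :: T)
  /-- The defunctionalized traced continuation-passing Fibonacci function. -/
  def fibCDef : ℕ → Int → FibCont → List Int → Option (Int × List Int)
    | 0, _, _, _ => none
    | n+1, m, c, T =>
        if m ≤ 1 then applyCont n c m T
        else fibCDef n (m - 1) (.C2 m c) ((m - 1) :: T)
end

/-- The relation k ≈ c between a functional continuation and a
defunctionalized continuation: for all v and T, k(v,T) = a iff
apply_cont(c,v,T) = a. -/
def Related (k : Int → List Int → Int × List Int) (c : FibCont) : Prop :=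
  ∀ (v : Int) (T : List Int) (a : Int × List Int),
    k v T = a ↔ ∃ n, applyCont n c v T = some a

lemma mono_aux : ∀ n : ℕ,
    (∀ c v T a, applyCont n c v T = some a → applyCont (n+1) c v T = some a) ∧
    (∀ m c T a, fibCDef n m c T = some a → fibCDef (n+1) m c T = some a) := by
  intro n
  induction n with
  | zero =>
    constructor <;> intro _ _ _ _ h <;> simp [applyCont, fibCDef] at h
  | succ n ih =>
    obtain ⟨ih1, ih2⟩ := ih
    constructor
    · rintro (_ | ⟨v1, c⟩ | ⟨m, c⟩) v T a h
      · simpa [applyCont] using h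
      · simp only [applyCont] at h ⊢; exact ih1 _ _ _ _ h
      · simp only [applyCont] at h ⊢; exact ih2 _ _ _ _ h
    · intro m c T a h
      by_cases hm : m ≤ 1 <;> simp only [fibCDef, hm, if_true, if_false] at h ⊢
      · exact ih1 _ _ _ _ h
      · exact ih2 _ _ _ _ h

lemma fibCDef_mono {n n' : ℕ} (h : n ≤ n') {m c T a}
    (ha : fibCDef n m c T = some a) : fibCDef n' m c T = some a := by
  induction n' with
  | zero =>
    have : n = 0 := by omega
    subst this; exact ha
  | succ n' ih =>
    rcases Nat.lt_or_ge n (n'+1) with h' | h'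
    · exact (mono_aux n').2 _ _ _ _ (ih (by omega))
    · have : n = n' + 1 := by omega
      subst this; exact ha

/-- Part (1) for all n (by strong induction on the measure) and all k ≈ c. -/
lemma fib_part1 : ∀ (N : ℕ) (n : Int), n.toNat ≤ N →
    ∀ (k : Int → List Int → Int × List Int) (c : FibCont), Related k c →
    ∀ (T : List Int) (a : Int × List Int),
      fibC n k T = a ↔ ∃ m, fibCDef m n c T = some a := by
  intro N
  induction N using Nat.strong_induction_on with
  | _ N IH =>
    intro n hn k c hkc T a
    by_cases h1 : n ≤ 1
    · rw [fibC, if_pos h1, hkc n T a]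
      constructor
      · rintro ⟨m, hm⟩
        exact ⟨m + 1, by simp [fibCDef, h1, hm]⟩
      · rintro ⟨m, hm⟩
        cases m with
        | zero => simp [fibCDef] at hm
        | succ m => simp only [fibCDef, h1, if_true] at hm; exact ⟨m, hm⟩
    · -- n > 1; relate the inner continuation to C2 n c using IH at n - 2
      have hn2 : ((n : Int) - 2).toNat < N := by omega
      have hrel2 : Related
          (fun v1 T => fibC (n - 2) (fun v2 T => k (v1 + v2) T) ((n - 2) :: T))
          (.C2 n c) := by
        intro v1 T' a'
        have hrel1 : Related (fun v2 T => k (v1 + v2) T) (.C1 v1 c) := by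
          intro v T'' a''
          rw [hkc (v1 + v) T'' a'']
          constructor
          · rintro ⟨m, hm⟩; exact ⟨m + 1, by simpa [applyCont] using hm⟩
          · rintro ⟨m, hm⟩
            cases m with
            | zero => simp [applyCont] at hm
            | succ m => exact ⟨m, by simpa [applyCont] using hm⟩
        rw [IH _ hn2 (n - 2) le_rfl _ _ hrel1 ((n - 2) :: T') a']
        constructor
        · rintro ⟨m, hm⟩
          exact ⟨m + 1, by simpa [applyCont] using hm⟩
        · rintro ⟨m, hm⟩
          cases m with
          | zero => simp [applyCont] at hm
          | succ m => exact ⟨m, by simpa [applyCont] using hm⟩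
      have hn1 : ((n : Int) - 1).toNat ≤ (n - 2).toNat + 1 := by omega
      have hmain := IH ((n - 2).toNat + 1) (by omega) (n - 1) hn1 _ _ hrel2
        ((n - 1) :: T) a
      rw [fibC, if_neg h1, hmain]
      constructor
      · rintro ⟨m, hm⟩
        exact ⟨m + 1, by simp [fibCDef, h1, hm]⟩
      · rintro ⟨m, hm⟩
        cases m with
        | zero => simp [fibCDef] at hm
        | succ m => simp only [fibCDef, h1, if_false] at hm; exact ⟨m, hm⟩

/-- Key lemma for the lockstep correspondence of the traced Fibonacci
functions, proved by simultaneous course-of-values induction on n: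
(1) for every k ≈ c, fib_c(n,k,T) = a iff fib_c_def(n,c,T) = a, and
(2) fn (v1,T) => fib_c(n, fn (v2,T) => k(v1+v2,T), n::T) ≈ C2(n+2,c). -/
theorem fib_key_lemma :
    ∀ (n : Int) (k : Int → List Int → Int × List Int) (c : FibCont),
      Related k c →
      (∀ (T : List Int) (a : Int × List Int),
          fibC n k T = a ↔ ∃ m, fibCDef m n c T = some a) ∧
      Related
        (fun v1 T => fibC n (fun v2 T => k (v1 + v2) T) (n :: T))
        (.C2 (n + 2) c) := by
  intro n k c hkc
  refine ⟨fib_part1 n.toNat n le_rfl k c hkc, ?_⟩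
  intro v1 T a
  have hrel1 : Related (fun v2 T => k (v1 + v2) T) (.C1 v1 c) := by
    intro v T'' a''
    rw [hkc (v1 + v) T'' a'']
    constructor
    · rintro ⟨m, hm⟩; exact ⟨m + 1, by simpa [applyCont] using hm⟩
    · rintro ⟨m, hm⟩
      cases m with
      | zero => simp [applyCont] at hm
      | succ m => exact ⟨m, by simpa [applyCont] using hm⟩
  rw [fib_part1 n.toNat n le_rfl _ _ hrel1 (n :: T) a]
  have key : ∀ m, applyCont (m + 1) (.C2 (n + 2) c) v1 T
      = fibCDef m n (.C1 v1 c) (n :: T) := by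
    intro m
    show fibCDef m (n + 2 - 2) (.C1 v1 c) ((n + 2 - 2) :: T) = _
    norm_num
  constructor
  · rintro ⟨m, hm⟩
    exact ⟨m + 1, by rw [key m]; exact hm⟩
  · rintro ⟨m, hm⟩
    cases m with
    | zero => simp [applyCont] at hm
    | succ m => exact ⟨m, by rw [← key m]; exact hm⟩
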